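/- arXiv:1512.00057 — 3 statements merged into one kernel-verified Lean document; each statement's English description precedes it below -/
import Mathlib

section
/- Let m > 0 be even, l = m/2, and ψ_{l,m}(ζ,ω) = sqrt((m+1)!/(l!(m-l)!)) ζ^l ω^l. For {z,w} ∈ SU(2), the projection of {z,w}.ψ_{l,m} onto the line ℂ·ψ_{l,m} equals p_l(|z|,|w|)·ψ_{l,m}, where p_l(|z|,|w|) = Σ_{i=0}^{l} (-1)^i (binom(l,i))² |z|^{2(l-i)} |w|^{2i}. -/
/-- The matrix coefficient `π_m^{j,p}` of the degree-`m` irreducible representation of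
SU(2), as a function of the point `(ζ,ω) ∈ S³ ⊂ ℂ²` identified with the group element
whose first column is `(ζ,ω)`:  `π_m^{j,p}(S) = ⟨S.ψ_{j,m}, ψ_{p,m}⟩` is the coefficient
of `ψ_{p,m}` in the expansion of `S.ψ_{j,m}` (where `(S.φ)(v) = φ(S* v)`). -/
noncomputable def cpi (m j p : ℕ) (ζ ω : ℂ) : ℂ :=
  ((Real.sqrt (((m + 1).factorial / (j.factorial * (m - j).factorial) : ℕ)) /
      Real.sqrt (((m + 1).factorial / (p.factorial * (m - p).factorial) : ℕ)) : ℝ) : ℂ) *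
    MvPolynomial.coeff (Finsupp.single (0 : Fin 2) p + Finsupp.single (1 : Fin 2) (m - p))
      ((MvPolynomial.C ((starRingEnd ℂ) ζ) * MvPolynomial.X 0
          + MvPolynomial.C ((starRingEnd ℂ) ω) * MvPolynomial.X 1) ^ j *
        (MvPolynomial.C (-ω) * MvPolynomial.X 0 + MvPolynomial.C ζ * MvPolynomial.X 1) ^ (m - j))

/-!
Expanding both linear forms by the binomial theorem, the coefficient of `ζ^l ω^l` in
`(z̄ζ + w̄ω)^l (-wζ + zω)^l` collects the products in which `ζ` is taken `k` times from the
first factor and `l - k` times from the second, giving `Σ_k binom(l,k)² z̄^k w̄^(l-k) (-w)^(l-k) z^k`;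
each summand is `(-1)^(l-k) binom(l,k)² |z|^(2k) |w|^(2(l-k))`. The normalising square roots cancel
because the row and column indices agree.
-/

open MvPolynomial Finset

theorem Finsupp.single_zero_add_single_one_eq_iff {p q r s : ℕ} :
    Finsupp.single (0 : Fin 2) p + Finsupp.single 1 q = Finsupp.single 0 r + Finsupp.single 1 s ↔
      p = r ∧ q = s := by
  refine ⟨fun h => ⟨?_, ?_⟩, fun ⟨hp, hq⟩ => hp ▸ hq ▸ rfl⟩
  · simpa using DFunLike.congr_fun h 0
  · simpa using DFunLike.congr_fun h 1

namespace MvPolynomial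

variable {R : Type*} [CommSemiring R]

theorem linear_form_pow_eq_sum_monomial (a b : R) (n : ℕ) :
    (C a * X (0 : Fin 2) + C b * X 1) ^ n =
      ∑ k ∈ range (n + 1), monomial (Finsupp.single 0 k + Finsupp.single 1 (n - k))
        (a ^ k * b ^ (n - k) * n.choose k) := by
  rw [add_pow]
  refine sum_congr rfl fun k _ => ?_
  rw [mul_pow, mul_pow, ← C_pow, ← C_pow, X_pow_eq_monomial, X_pow_eq_monomial,
    C_mul_monomial, C_mul_monomial, mul_one, mul_one, monomial_mul, ← C_eq_coe_nat,
    mul_comm _ (C _), C_mul_monomial]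
  ring_nf

theorem coeff_linear_form_pow_mul_linear_form_pow (a b c d : R) (n : ℕ) :
    coeff (Finsupp.single 0 n + Finsupp.single 1 n)
        ((C a * X (0 : Fin 2) + C b * X 1) ^ n * (C c * X 0 + C d * X 1) ^ n) =
      ∑ k ∈ range (n + 1), a ^ k * b ^ (n - k) * c ^ (n - k) * d ^ k * (n.choose k : R) ^ 2 := by
  rw [linear_form_pow_eq_sum_monomial, linear_form_pow_eq_sum_monomial, sum_mul_sum]
  simp only [monomial_mul, coeff_sum, coeff_monomial, add_add_add_comm, ← Finsupp.single_add,
    Finsupp.single_zero_add_single_one_eq_iff]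
  refine sum_congr rfl fun k hk => ?_
  rw [mem_range] at hk
  rw [sum_eq_single_of_mem (n - k) (by rw [mem_range]; omega), if_pos (by omega),
    Nat.sub_sub_self (by omega), Nat.choose_symm (by omega)]
  · ring
  · intro j _ hj
    exact if_neg (by omega)

end MvPolynomial

theorem stmt_6_general (l : ℕ) (z w : ℂ) :
    cpi (2 * l) l l z w =
      ((∑ i ∈ Finset.range (l + 1), (-1 : ℝ) ^ i * (l.choose i : ℝ) ^ 2 *
          ‖z‖ ^ (2 * (l - i)) * ‖w‖ ^ (2 * i) : ℝ) : ℂ) := by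
  have two_mul_sub : 2 * l - l = l := by omega
  have normaliser_pos : 0 < (2 * l + 1).factorial / (l.factorial * l.factorial) :=
    Nat.div_pos ((Nat.le_of_dvd (Nat.factorial_pos _)
      (Nat.factorial_mul_factorial_dvd_factorial_add l l)).trans (Nat.factorial_le (by omega)))
      (by positivity)
  rw [cpi, two_mul_sub, div_self (Real.sqrt_pos.mpr (by exact_mod_cast normaliser_pos)).ne',
    Complex.ofReal_one, one_mul, coeff_linear_form_pow_mul_linear_form_pow,
    ← sum_range_reflect, Complex.ofReal_sum]
  refine sum_congr rfl fun i hi => ?_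
  have hi : i ≤ l := Nat.lt_succ_iff.mp (mem_range.mp hi)
  rw [Nat.add_sub_cancel, Nat.sub_sub_self hi, Nat.choose_symm hi]
  calc (starRingEnd ℂ) z ^ (l - i) * (starRingEnd ℂ) w ^ i * (-w) ^ i * z ^ (l - i) *
        (l.choose i : ℂ) ^ 2
      = ((starRingEnd ℂ) z * z) ^ (l - i) * ((starRingEnd ℂ) w * w) ^ i * (-1) ^ i *
        (l.choose i : ℂ) ^ 2 := by rw [neg_pow]; ring
    _ = _ := by
      rw [Complex.conj_mul', Complex.conj_mul', ← pow_mul, ← pow_mul]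
      push_cast
      ring

/-- for `m = 2l > 0` even, the projection of `{z,w}.ψ_{l,m}` onto
`ℂ·ψ_{l,m}`, i.e. the matrix coefficient `⟨{z,w}.ψ_{l,m}, ψ_{l,m}⟩`, equals
`p_l(|z|,|w|) = Σ_{i=0}^{l} (-1)^i binom(l,i)² |z|^{2(l-i)} |w|^{2i}`. -/
theorem stmt_6 (l : ℕ) (hl : 1 ≤ l) (z w : ℂ)
    (h : ‖z‖ ^ 2 + ‖w‖ ^ 2 = 1) :
    cpi (2 * l) l l z w =
      ((∑ i ∈ Finset.range (l + 1), (-1 : ℝ) ^ i * (l.choose i : ℝ) ^ 2 *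
          ‖z‖ ^ (2 * (l - i)) * ‖w‖ ^ (2 * i) : ℝ) : ℂ) :=
  stmt_6_general l z w
end

section
/- With l ≥ 1 and p_l(x) = Σ_{i=0}^{l} (-1)^i (binom(l,i))² x^{l-i} (1-x)^i for x ∈ [0,1] (the projection factor with x = |z|²), one has |p_l(x)| ≤ 1 for all x ∈ [0,1], p_l(1) = 1, p_l(0) = (-1)^l, and |p_l(x)| < 1 for x ∈ (0,1). -/
/-!
Write `x = ‖z‖²` and `1 - x = ‖w‖²`. Then `p_l(x)` is the constant term of the Laurent polynomial
`((z - w u) (z̄ + w̄ u⁻¹))^l`, hence its average over the `(l+1)`-st roots of unity `u`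
(a discrete form of Laplace's integral for Legendre polynomials). For `‖u‖ = 1` the base equals
`(z - w u) · conj (z + w u)`, whose norm is at most `(‖z - w u‖² + ‖z + w u‖²) / 2 = ‖z‖² + ‖w‖² = 1`
by the parallelogram law, strictly so at `u = 1` when `z, w > 0` are real.
-/

open Finset ComplexConjugate

theorem IsPrimitiveRoot.sum_pow_mul_inv_pow {K : Type*} [Field K] {ζ : K} {N : ℕ}
    (hζ : IsPrimitiveRoot ζ N) {i j : ℕ} (hi : i < N) (hj : j < N) :
    ∑ m ∈ range N, (ζ ^ m) ^ i * ((ζ ^ m)⁻¹) ^ j = if i = j then (N : K) else 0 := by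
  have hζ0 : ζ ≠ 0 := hζ.ne_zero (by omega)
  set ω := ζ ^ i * (ζ ^ j)⁻¹
  have hterm (m : ℕ) : (ζ ^ m) ^ i * ((ζ ^ m)⁻¹) ^ j = ω ^ m := by
    simp only [ω, mul_pow, inv_pow, ← pow_mul, mul_comm]
  simp_rw [hterm]
  split_ifs with hij
  · simp [ω, hij, hζ0]
  · have hω : ω ≠ 1 := by
      rw [Ne, mul_inv_eq_one₀ (pow_ne_zero _ hζ0)]
      exact fun h => hij (hζ.pow_inj hi hj h)
    have hωN : ω ^ N = 1 := by
      simp only [ω, mul_pow, inv_pow, ← pow_mul]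
      rw [mul_comm i, mul_comm j, pow_mul, pow_mul, hζ.pow_eq_one]
      simp
    rw [geom_sum_eq hω, hωN, sub_self, zero_div]

theorem IsPrimitiveRoot.sum_mul_sum_inv_pow {K : Type*} [Field K] {ζ : K} {N n : ℕ}
    (hζ : IsPrimitiveRoot ζ N) (hn : n ≤ N) (a b : ℕ → K) :
    ∑ m ∈ range N, (∑ i ∈ range n, a i * (ζ ^ m) ^ i) * (∑ j ∈ range n, b j * ((ζ ^ m)⁻¹) ^ j) =
      N * ∑ i ∈ range n, a i * b i := by
  have hexp (m : ℕ) : (∑ i ∈ range n, a i * (ζ ^ m) ^ i) * (∑ j ∈ range n, b j * ((ζ ^ m)⁻¹) ^ j)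
      = ∑ i ∈ range n, ∑ j ∈ range n, a i * b j * ((ζ ^ m) ^ i * ((ζ ^ m)⁻¹) ^ j) := by
    rw [sum_mul_sum]
    exact sum_congr rfl fun i _ => sum_congr rfl fun j _ => by ring
  simp_rw [hexp]
  rw [sum_comm, mul_sum]
  refine sum_congr rfl fun i hi => ?_
  rw [sum_comm, sum_eq_single i]
  · rw [← mul_sum, hζ.sum_pow_mul_inv_pow (by simp at hi; omega) (by simp at hi; omega), if_pos rfl]
    ring
  · intro j hj hji
    rw [← mul_sum, hζ.sum_pow_mul_inv_pow (by simp at hi; omega) (by simp at hj; omega),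
      if_neg (Ne.symm hji), mul_zero]
  · intro h; exact absurd hi h

noncomputable def projectionFactor (l : ℕ) (x : ℝ) : ℝ :=
  ∑ i ∈ range (l + 1), (-1 : ℝ) ^ i * (l.choose i : ℝ) ^ 2 * x ^ (l - i) * (1 - x) ^ i

theorem IsPrimitiveRoot.natCast_mul_projectionFactor {ζ : ℂ} {N l : ℕ}
    (hζ : IsPrimitiveRoot ζ N) (hl : l < N) {z w : ℂ} (hzw : ‖z‖ ^ 2 + ‖w‖ ^ 2 = 1) :
    (N : ℂ) * projectionFactor l (‖z‖ ^ 2) =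
      ∑ m ∈ range N, ((z - w * ζ ^ m) * conj (z + w * ζ ^ m)) ^ l := by
  have hconj (m : ℕ) : conj (ζ ^ m) = (ζ ^ m)⁻¹ :=
    (Complex.inv_eq_conj (by rw [norm_pow, hζ.norm'_eq_one (by omega), one_pow])).symm
  have hexpand (m : ℕ) : ((z - w * ζ ^ m) * conj (z + w * ζ ^ m)) ^ l =
      (∑ i ∈ range (l + 1), (-w) ^ i * z ^ (l - i) * l.choose i * (ζ ^ m) ^ i) *
        ∑ i ∈ range (l + 1), conj w ^ i * conj z ^ (l - i) * l.choose i * ((ζ ^ m)⁻¹) ^ i := by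
    rw [map_add, map_mul, hconj, mul_pow, sub_eq_add_neg, add_comm, add_comm (conj z), add_pow,
      add_pow]
    congr 1 <;> exact sum_congr rfl fun i _ => by ring
  simp_rw [hexpand]
  rw [hζ.sum_mul_sum_inv_pow hl, projectionFactor, show 1 - ‖z‖ ^ 2 = ‖w‖ ^ 2 by linarith]
  push_cast
  refine congrArg _ (sum_congr rfl fun i _ => ?_)
  rw [← Complex.mul_conj', ← Complex.mul_conj']
  ring

section

variable {E : Type*} [NormedAddCommGroup E] [InnerProductSpace ℝ E]

theorem norm_sub_mul_norm_add_le (a b : E) : ‖a - b‖ * ‖a + b‖ ≤ ‖a‖ ^ 2 + ‖b‖ ^ 2 := by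
  nlinarith [parallelogram_law_with_norm ℝ a b, sq_nonneg (‖a + b‖ - ‖a - b‖)]

theorem norm_sub_mul_norm_add_lt {a b : E} (h : ‖a - b‖ ≠ ‖a + b‖) :
    ‖a - b‖ * ‖a + b‖ < ‖a‖ ^ 2 + ‖b‖ ^ 2 := by
  nlinarith [parallelogram_law_with_norm ℝ a b, sq_pos_of_ne_zero (sub_ne_zero.2 h)]

end

theorem IsPrimitiveRoot.natCast_mul_abs_projectionFactor_le {ζ : ℂ} {N l : ℕ}
    (hζ : IsPrimitiveRoot ζ N) (hl : l < N) {z w : ℂ} (hzw : ‖z‖ ^ 2 + ‖w‖ ^ 2 = 1) :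
    N * |projectionFactor l (‖z‖ ^ 2)| ≤
      ∑ m ∈ range N, (‖z - w * ζ ^ m‖ * ‖z + w * ζ ^ m‖) ^ l := by
  have h := congrArg norm (hζ.natCast_mul_projectionFactor hl hzw)
  rw [norm_mul, Complex.norm_natCast, Complex.norm_real, Real.norm_eq_abs] at h
  rw [h]
  refine (norm_sum_le _ _).trans_eq (sum_congr rfl fun m _ => ?_)
  rw [norm_pow, norm_mul, Complex.norm_conj]

theorem norm_sub_mul_norm_add_mul_le_one {z w u : ℂ} (hu : ‖u‖ = 1)
    (hzw : ‖z‖ ^ 2 + ‖w‖ ^ 2 = 1) : ‖z - w * u‖ * ‖z + w * u‖ ≤ 1 := by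
  simpa [hu, hzw] using norm_sub_mul_norm_add_le z (w * u)

theorem abs_projectionFactor_sq_norm_le (l : ℕ) {z w : ℂ} (hzw : ‖z‖ ^ 2 + ‖w‖ ^ 2 = 1) :
    |projectionFactor l (‖z‖ ^ 2)| ≤ 1 := by
  obtain ⟨ζ, hζ⟩ : ∃ ζ : ℂ, IsPrimitiveRoot ζ (l + 1) :=
    ⟨_, Complex.isPrimitiveRoot_exp _ l.succ_ne_zero⟩
  have hterm (m : ℕ) : (‖z - w * ζ ^ m‖ * ‖z + w * ζ ^ m‖) ^ l ≤ 1 :=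
    pow_le_one₀ (by positivity) <| norm_sub_mul_norm_add_mul_le_one
      (by rw [norm_pow, hζ.norm'_eq_one l.succ_ne_zero, one_pow]) hzw
  have h := (hζ.natCast_mul_abs_projectionFactor_le l.lt_succ_self hzw).trans
    (sum_le_sum fun m _ => hterm m)
  rw [sum_const, card_range, nsmul_one] at h
  exact le_of_mul_le_mul_left (by simpa using h) (by positivity)

theorem abs_projectionFactor_sq_norm_lt {l : ℕ} (hl : l ≠ 0) {z w : ℂ}
    (hzw : ‖z‖ ^ 2 + ‖w‖ ^ 2 = 1) (hne : ‖z - w‖ ≠ ‖z + w‖) :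
    |projectionFactor l (‖z‖ ^ 2)| < 1 := by
  obtain ⟨ζ, hζ⟩ : ∃ ζ : ℂ, IsPrimitiveRoot ζ (l + 1) :=
    ⟨_, Complex.isPrimitiveRoot_exp _ l.succ_ne_zero⟩
  have hterm (m : ℕ) : (‖z - w * ζ ^ m‖ * ‖z + w * ζ ^ m‖) ^ l ≤ 1 :=
    pow_le_one₀ (by positivity) <| norm_sub_mul_norm_add_mul_le_one
      (by rw [norm_pow, hζ.norm'_eq_one l.succ_ne_zero, one_pow]) hzw
  have hterm₀ : (‖z - w * ζ ^ 0‖ * ‖z + w * ζ ^ 0‖) ^ l < 1 := by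
    rw [pow_zero, mul_one]
    exact pow_lt_one₀ (by positivity) (hzw ▸ norm_sub_mul_norm_add_lt hne) hl
  have h := (hζ.natCast_mul_abs_projectionFactor_le l.lt_succ_self hzw).trans_lt
    (sum_lt_sum (fun m _ => hterm m) ⟨0, by simp, hterm₀⟩)
  rw [sum_const, card_range, nsmul_one] at h
  exact lt_of_mul_lt_mul_left (by simpa using h) (by positivity)

theorem projectionFactor_one (l : ℕ) : projectionFactor l 1 = 1 := by
  rw [projectionFactor, sum_eq_single 0 (fun i _ hi => by rw [sub_self, zero_pow hi, mul_zero])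
    (by simp)]
  simp

theorem projectionFactor_zero (l : ℕ) : projectionFactor l 0 = (-1) ^ l := by
  rw [projectionFactor, sum_eq_single l
    (fun i hi hil => by rw [zero_pow (by simp at hi; omega), mul_zero, zero_mul]) (by simp)]
  simp

theorem norm_ofReal_sqrt_sq {x : ℝ} (hx : 0 ≤ x) : ‖((√x : ℝ) : ℂ)‖ ^ 2 = x := by
  rw [Complex.norm_real, Real.norm_eq_abs, sq_abs, Real.sq_sqrt hx]

theorem abs_projectionFactor_le (l : ℕ) {x : ℝ} (hx : x ∈ Set.Icc 0 1) :
    |projectionFactor l x| ≤ 1 := by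
  have h := abs_projectionFactor_sq_norm_le l (z := √x) (w := √(1 - x))
    (by rw [norm_ofReal_sqrt_sq hx.1, norm_ofReal_sqrt_sq (sub_nonneg.2 hx.2)]; ring)
  rwa [norm_ofReal_sqrt_sq hx.1] at h

theorem abs_projectionFactor_lt {l : ℕ} (hl : l ≠ 0) {x : ℝ} (hx : x ∈ Set.Ioo 0 1) :
    |projectionFactor l x| < 1 := by
  have ha : 0 < √x := Real.sqrt_pos.2 hx.1
  have hb : 0 < √(1 - x) := Real.sqrt_pos.2 (sub_pos.2 hx.2)
  have hne : ‖((√x : ℝ) : ℂ) - √(1 - x)‖ ≠ ‖((√x : ℝ) : ℂ) + √(1 - x)‖ := by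
    rw [← Complex.ofReal_sub, ← Complex.ofReal_add, Complex.norm_real, Complex.norm_real,
      Real.norm_eq_abs, Real.norm_eq_abs, abs_of_pos (add_pos ha hb)]
    exact (abs_sub_lt_iff.2 ⟨by linarith, by linarith⟩).ne
  have h := abs_projectionFactor_sq_norm_lt hl
    (by rw [norm_ofReal_sqrt_sq hx.1.le, norm_ofReal_sqrt_sq (sub_pos.2 hx.2).le]; ring) hne
  rwa [norm_ofReal_sqrt_sq hx.1.le] at h

/-- for `l ≥ 1` and `p_l(x) = Σ_{i=0}^{l} (-1)^i binom(l,i)² x^{l-i}(1-x)^i`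
(a Legendre polynomial up to a change of variables), one has `|p_l(x)| ≤ 1` on `[0,1]`,
`p_l(1) = 1`, `p_l(0) = (-1)^l`, and `|p_l(x)| < 1` on `(0,1)`. -/
theorem stmt_7 (l : ℕ) (hl : 1 ≤ l) :
    letI pl : ℝ → ℝ := fun x =>
      ∑ i ∈ Finset.range (l + 1),
        (-1 : ℝ) ^ i * (l.choose i : ℝ) ^ 2 * x ^ (l - i) * (1 - x) ^ i
    (∀ x ∈ Set.Icc (0 : ℝ) 1, |pl x| ≤ 1) ∧
    pl 1 = 1 ∧
    pl 0 = (-1 : ℝ) ^ l ∧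
    (∀ x ∈ Set.Ioo (0 : ℝ) 1, |pl x| < 1) :=
  ⟨fun _ hx => abs_projectionFactor_le l hx, projectionFactor_one l, projectionFactor_zero l,
    fun _ hx => abs_projectionFactor_lt (by omega) hx⟩
end

section
/- Let m > 0 be even, l = m/2, and D = {z,w} ∈ SU(2). The projection coefficient ⟨D.ψ_{l,m}, ψ_{l,m}⟩ has absolute value 1 if and only if D lies in the normalizer of the diagonal torus of SU(2), i.e. if and only if z = 0 or w = 0; otherwise |⟨D.ψ_{l,m}, ψ_{l,m}⟩| < 1. -/
open Finset Complex
open scoped Real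

section CommSemiring

variable {R : Type*} [CommSemiring R]

/-- The homogeneous form of the Legendre polynomial:
`P_l(t) = legendreForm l ((t + 1) / 2) ((t - 1) / 2)`. -/
def legendreForm (l : ℕ) (p q : R) : R :=
  ∑ k ∈ range (l + 1), (l.choose k : R) ^ 2 * p ^ k * q ^ (l - k)

theorem legendreForm_zero_left (l : ℕ) (q : R) :
    legendreForm l 0 q = q ^ l := by
  rw [legendreForm, sum_eq_single 0 (fun k _ hk => by simp [zero_pow hk]) (by simp)]
  simp

theorem legendreForm_zero_right (l : ℕ) (p : R) :
    legendreForm l p 0 = p ^ l := by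
  rw [legendreForm, sum_eq_single l (fun k hk hkl => ?_) (by simp)]
  · simp
  · have : l - k ≠ 0 := by have := mem_range.mp hk; omega
    simp [zero_pow this]

section Coefficients

open MvPolynomial
open Finsupp (single)

theorem linear_add_pow_eq_sum_monomial (a b : R) (l : ℕ) :
    (C a * X 0 + C b * X 1 : MvPolynomial (Fin 2) R) ^ l
      = ∑ k ∈ range (l + 1),
          monomial (single 0 k + single 1 (l - k)) (l.choose k * a ^ k * b ^ (l - k)) := by
  rw [add_pow]
  refine sum_congr rfl fun k _ => ?_
  simp only [mul_pow, ← C_pow, X_pow_eq_monomial, C_mul_monomial, monomial_mul,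
    ← map_natCast (C (σ := Fin 2))]
  rw [mul_comm, C_mul_monomial]
  ring_nf

theorem coeff_linear_add_pow (a b : R) {i l : ℕ} (hi : i ≤ l) :
    coeff (single 0 i + single 1 (l - i)) ((C a * X 0 + C b * X 1 : MvPolynomial (Fin 2) R) ^ l)
      = l.choose i * a ^ i * b ^ (l - i) := by
  rw [linear_add_pow_eq_sum_monomial, coeff_sum, sum_eq_single i]
  · rw [coeff_monomial, if_pos rfl]
  · intro k _ hki
    rw [coeff_monomial, if_neg]
    intro h
    exact hki (by simpa using congrArg (· 0) h)
  · intro hi'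
    exact absurd (mem_range.mpr (Nat.lt_succ_of_le hi)) hi'

theorem coeff_linear_pow_mul_linear_pow (a b c d : R) (l : ℕ) :
    coeff (single 0 l + single 1 l)
      ((C a * X 0 + C b * X 1 : MvPolynomial (Fin 2) R) ^ l * (C c * X 0 + C d * X 1) ^ l)
      = legendreForm l (a * d) (b * c) := by
  rw [linear_add_pow_eq_sum_monomial, sum_mul, coeff_sum, legendreForm]
  refine sum_congr rfl fun k hk => ?_
  have hkl : k ≤ l := Nat.lt_succ_iff.mp (mem_range.mp hk)
  have hle : single 0 k + single 1 (l - k) ≤ single (0 : Fin 2) l + single 1 l := by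
    intro i; fin_cases i <;> simp [hkl]
  have hsub : single 0 l + single 1 l - (single 0 k + single 1 (l - k))
      = single (0 : Fin 2) (l - k) + single 1 (l - (l - k)) := by
    ext i; fin_cases i <;> simp
  rw [coeff_monomial_mul', if_pos hle, hsub, coeff_linear_add_pow _ _ (Nat.sub_le l k),
    Nat.choose_symm hkl, Nat.sub_sub_self hkl]
  ring

end Coefficients

end CommSemiring

theorem cpi_two_mul_self (l : ℕ) (z w : ℂ) :
    cpi (2 * l) l l z w
      = legendreForm l ((‖z‖ ^ 2 : ℝ) : ℂ) (-((‖w‖ ^ 2 : ℝ) : ℂ)) := by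
  have h2l : 2 * l - l = l := by omega
  have hN : 0 < (2 * l + 1).factorial / (l.factorial * l.factorial) :=
    Nat.div_pos (Nat.le_of_dvd (Nat.factorial_pos _)
        ((Nat.factorial_mul_factorial_dvd_factorial_add l l).trans
          (Nat.factorial_dvd_factorial (by omega))))
      (by positivity)
  rw [cpi, h2l, div_self (Real.sqrt_pos.mpr (by exact_mod_cast hN)).ne', ofReal_one,
    one_mul, coeff_linear_pow_mul_linear_pow, conj_mul', mul_neg, conj_mul']
  push_cast
  rfl

theorem integral_exp_int_mul_mul_I (n : ℤ) :
    ∫ θ in (0 : ℝ)..2 * π, exp (n * (θ * I)) = if n = 0 then (2 * π : ℂ) else 0 := by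
  split_ifs with hn
  · simp [hn]
  · have hc : (n * I : ℂ) ≠ 0 := mul_ne_zero (Int.cast_ne_zero.mpr hn) I_ne_zero
    simp_rw [← mul_assoc, mul_right_comm (n : ℂ) _ I]
    rw [integral_exp_mul_complex hc]
    have harg : (n * I * ((2 * π : ℝ) : ℂ)) = n * (2 * π * I) := by push_cast; ring
    rw [harg, exp_int_mul_two_pi_mul_I]
    simp

theorem integral_sum_exp_mul_sum_exp (s : Finset ℕ) (p q : ℕ → ℂ) :
    ∫ θ in (0 : ℝ)..2 * π,
        (∑ k ∈ s, p k * exp (k * (θ * I))) * ∑ j ∈ s, q j * exp (j * -(θ * I))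
      = 2 * π * ∑ k ∈ s, p k * q k := by
  have hterm (k j : ℕ) (θ : ℝ) : p k * exp (k * (θ * I)) * (q j * exp (j * -(θ * I)))
      = p k * q j * exp (((k - j : ℤ) : ℂ) * (θ * I)) := by
    rw [mul_mul_mul_comm, ← exp_add]
    push_cast
    ring_nf
  simp_rw [sum_mul_sum, hterm]
  rw [intervalIntegral.integral_finsetSum fun k _ => by
    exact (continuous_finsetSum _ fun j _ => by fun_prop).intervalIntegrable _ _]
  rw [mul_sum]
  refine sum_congr rfl fun k hk => ?_
  rw [intervalIntegral.integral_finsetSum fun j _ => by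
    exact (by fun_prop : Continuous _).intervalIntegrable _ _]
  simp_rw [intervalIntegral.integral_const_mul, integral_exp_int_mul_mul_I, sub_eq_zero,
    Nat.cast_inj, mul_ite, mul_zero]
  rw [sum_ite_eq s k, if_pos hk]
  ring

theorem mul_exp_add_pow (a b t : ℂ) (l : ℕ) :
    (a * exp t + b) ^ l
      = ∑ k ∈ range (l + 1), l.choose k * a ^ k * b ^ (l - k) * exp (k * t) := by
  rw [add_pow]
  refine sum_congr rfl fun k _ => ?_
  rw [mul_pow, exp_nat_mul]
  ring

theorem integral_pow_eq_two_pi_mul_legendreForm (a b c d : ℂ) (l : ℕ) :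
    ∫ θ in (0 : ℝ)..2 * π, ((a * exp (θ * I) + b) * (d * exp (-(θ * I)) + c)) ^ l
      = 2 * π * legendreForm l (a * d) (b * c) := by
  simp_rw [mul_pow, mul_exp_add_pow]
  rw [integral_sum_exp_mul_sum_exp, legendreForm]
  congr 1
  refine sum_congr rfl fun k _ => ?_
  ring

theorem norm_sqrt_mul_exp_add_mul_sqrt_mul_exp_sub {x y : ℝ} (hx : 0 ≤ x) (hy : 0 ≤ y)
    (θ : ℝ) :
    ‖((√x : ℂ) * exp (θ * I) + √y) * (√x * exp (-(θ * I)) + -√y)‖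
      = √((x - y) ^ 2 + 4 * x * y * Real.sin θ ^ 2) := by
  have hx' : ((√x : ℂ)) ^ 2 = x := by rw [← ofReal_pow, Real.sq_sqrt hx]
  have hy' : ((√y : ℂ)) ^ 2 = y := by rw [← ofReal_pow, Real.sq_sqrt hy]
  have hsc : sin θ ^ 2 + cos θ ^ 2 = 1 := sin_sq_add_cos_sq _
  have hcart : ((√x : ℂ) * exp (θ * I) + √y) * (√x * exp (-(θ * I)) + -√y)
      = ((x - y : ℝ) : ℂ) + ((-2 * √(x * y) * Real.sin θ : ℝ) : ℂ) * I := by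
    rw [← neg_mul, exp_mul_I, exp_mul_I, cos_neg, sin_neg, Real.sqrt_mul hx]
    simp only [ofReal_sub, ofReal_mul, ofReal_neg, ofReal_ofNat, ofReal_sin]
    linear_combination (√x : ℂ) ^ 2 * hsc + hx' - hy' - ((√x : ℂ) ^ 2 * sin θ ^ 2) * I_sq
  rw [hcart, norm_add_mul_I, mul_pow, mul_pow, Real.sq_sqrt (mul_nonneg hx hy)]
  ring_nf

theorem norm_legendreForm_lt_one {l : ℕ} (hl : l ≠ 0) {x y : ℝ} (hx : 0 < x) (hy : 0 < y)
    (hxy : x + y = 1) : ‖legendreForm l (x : ℂ) (-(y : ℂ))‖ < 1 := by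
  set S := legendreForm l (x : ℂ) (-(y : ℂ))
  set g : ℝ → ℂ := fun θ =>
    ((√x : ℂ) * exp (θ * I) + √y) * (√x * exp (-(θ * I)) + -√y)
  have hrep : ∫ θ in (0 : ℝ)..2 * π, g θ ^ l = 2 * π * S := by
    rw [integral_pow_eq_two_pi_mul_legendreForm, mul_neg, ← ofReal_mul, ← ofReal_mul,
      Real.mul_self_sqrt hx.le, Real.mul_self_sqrt hy.le]
  have hle (θ : ℝ) : ‖g θ‖ ≤ 1 := by
    rw [norm_sqrt_mul_exp_add_mul_sqrt_mul_exp_sub hx.le hy.le, Real.sqrt_le_one]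
    nlinarith [Real.sin_sq_le_one θ, mul_pos hx hy]
  have hlt : ‖g 0‖ < 1 := by
    rw [norm_sqrt_mul_exp_add_mul_sqrt_mul_exp_sub hx.le hy.le, Real.sin_zero,
      Real.sqrt_lt' one_pos]
    nlinarith
  have h2π : (0 : ℝ) < 2 * π := by positivity
  have : 2 * π * ‖S‖ < 2 * π * 1 :=
    calc 2 * π * ‖S‖ = ‖∫ θ in (0 : ℝ)..2 * π, g θ ^ l‖ := by
          rw [hrep, ← ofReal_ofNat, ← ofReal_mul, norm_mul, norm_real,
            Real.norm_of_nonneg h2π.le]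
      _ ≤ ∫ θ in (0 : ℝ)..2 * π, ‖g θ‖ ^ l := by
          simpa only [norm_pow] using
            intervalIntegral.norm_integral_le_integral_norm (f := fun θ => g θ ^ l) h2π.le
      _ < ∫ θ in (0 : ℝ)..2 * π, 1 := by
          refine intervalIntegral.integral_lt_integral_of_continuousOn_of_le_of_exists_lt h2π
            (by fun_prop) continuousOn_const (fun θ _ => pow_le_one₀ (norm_nonneg _) (hle θ))
            ⟨0, ⟨le_rfl, h2π.le⟩, pow_lt_one₀ (norm_nonneg _) hlt hl⟩
      _ = 2 * π * 1 := by simp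
  exact lt_of_mul_lt_mul_left this h2π.le

/-- for `m = 2l > 0` even, the projection coefficient
`⟨D.ψ_{l,m}, ψ_{l,m}⟩` of `D = {z,w} ∈ SU(2)` has absolute value `1` iff `D` is in the
normalizer of the diagonal torus, i.e. iff `z = 0` or `w = 0`; otherwise it is `< 1`. -/
theorem stmt_8 (l : ℕ) (hl : 1 ≤ l) (z w : ℂ)
    (h : ‖z‖ ^ 2 + ‖w‖ ^ 2 = 1) :
    (‖cpi (2 * l) l l z w‖ = 1 ↔ (z = 0 ∨ w = 0)) ∧
    (z ≠ 0 → w ≠ 0 → ‖cpi (2 * l) l l z w‖ < 1) := by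
  rw [cpi_two_mul_self]
  have hlt (hz : z ≠ 0) (hw : w ≠ 0) :
      ‖legendreForm l ((‖z‖ ^ 2 : ℝ) : ℂ) (-((‖w‖ ^ 2 : ℝ) : ℂ))‖ < 1 :=
    norm_legendreForm_lt_one (by omega) (by positivity) (by positivity) h
  refine ⟨⟨fun h1 => ?_, ?_⟩, hlt⟩
  · by_contra! hzw
    exact (hlt hzw.1 hzw.2).ne h1
  · rintro (rfl | rfl)
    · have hw : ‖w‖ ^ 2 = 1 := by simpa using h
      simp [legendreForm_zero_left, hw]
    · have hz : ‖z‖ ^ 2 = 1 := by simpa using h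
      simp [legendreForm_zero_right, hz]
end
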